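/- arXiv:2406.17348 — 7 statements merged into one kernel-verified Lean document; each statement's English description precedes it below -/
import Mathlib

section
/- Let (v_k)_{k≥1} be an increasing sequence of positive reals, n ∈ ℕ*, g > 0, satisfying v_{k+n} - v_k ≥ g(2kn + n²) for all k ≥ 1. Then for all integers m ≥ n and all k ≥ 1, v_{k+m} - v_k ≥ (g/4)(2km + m²), i.e. v_{k+m} - v_k ≥ (g/4)((k+m)² - k²). -/
theorem stmt_3 (v : ℕ → ℝ) (n : ℕ) (g : ℝ)
    (hmono : StrictMono v) (hpos : ∀ k, 1 ≤ k → 0 < v k)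
    (hn : 1 ≤ n) (hg : 0 < g)
    (hgap : ∀ k : ℕ, 1 ≤ k → v (k + n) - v k ≥ g * (2 * k * n + (n : ℝ) ^ 2)) :
    ∀ m : ℕ, n ≤ m → ∀ k : ℕ, 1 ≤ k →
      v (k + m) - v k ≥ (g / 4) * (2 * k * m + (m : ℝ) ^ 2) ∧
      v (k + m) - v k ≥ (g / 4) * (((k : ℝ) + m) ^ 2 - (k : ℝ) ^ 2) := by
  have key : ∀ q : ℕ, 1 ≤ q → ∀ k : ℕ, 1 ≤ k →
      v (k + q * n) - v k ≥ g * (2 * k * (q * n) + ((q * n : ℕ) : ℝ) ^ 2) := by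
    intro q hq
    induction q with
    | zero => omega
    | succ q ih =>
      intro k hk
      rcases Nat.eq_or_lt_of_le hq with h1 | h1
      · have : q = 0 := by omega
        subst this
        have := hgap k hk
        simpa using this
      · have hq1 : 1 ≤ q := by omega
        have h2 := ih hq1 k hk
        have h3 := hgap (k + q * n) (by omega)
        have harr : k + q * n + n = k + (q + 1) * n := by ring
        rw [harr] at h3
        have := add_le_add h2 h3
        push_cast at h2 h3 ⊢
        nlinarith [h2, h3]
  intro m hm k hk
  set q := m / n with hqdef
  have hq1 : 1 ≤ q := Nat.one_le_div_iff (by omega) |>.mpr hm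
  have hle : q * n ≤ m := Nat.div_mul_le_self m n
  have hlt : m < (q + 1) * n := by
    have h2 : n * q + m % n = m := Nat.div_add_mod m n
    have h1 : m % n < n := Nat.mod_lt m (by omega)
    calc m = n * q + m % n := h2.symm
      _ < n * q + n := Nat.add_lt_add_left h1 _
      _ = (q + 1) * n := by ring
  have h2qn : m ≤ 2 * (q * n) := by nlinarith
  have hmono' : v (k + q * n) ≤ v (k + m) := hmono.monotone (by omega)
  have h := key q hq1 k hk
  have hs : ((q * n : ℕ) : ℝ) ≥ (m : ℝ) / 2 := by
    have : (m : ℝ) ≤ 2 * ((q * n : ℕ) : ℝ) := by exact_mod_cast h2qn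
    linarith
  have hk1 : (1 : ℝ) ≤ (k : ℝ) := by exact_mod_cast hk
  have hm0 : (0 : ℝ) ≤ (m : ℝ) := Nat.cast_nonneg m
  have main : v (k + m) - v k ≥ (g / 4) * (2 * k * m + (m : ℝ) ^ 2) := by
    push_cast at h hs
    set s : ℝ := (q : ℝ) * (n : ℝ) with hsdef
    have hs0 : (0 : ℝ) ≤ s := by positivity
    have hk0 : (0 : ℝ) ≤ (k : ℝ) := by linarith
    have h2sm : (0 : ℝ) ≤ 2 * s - m := by linarith
    have hsq : (0 : ℝ) ≤ s ^ 2 - (m / 2) ^ 2 := by nlinarith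
    nlinarith [h, hmono',
      mul_nonneg (mul_nonneg hg.le h2sm) hk0,
      mul_nonneg hg.le hsq, mul_nonneg (mul_nonneg hg.le hm0) hk0]
  refine ⟨main, ?_⟩
  have : ((k : ℝ) + m) ^ 2 - (k : ℝ) ^ 2 = 2 * k * m + (m : ℝ) ^ 2 := by ring
  rw [this]
  exact main
end

section
/- With the auxiliary sequence ν of the previous context (ν_k = μ_k if μ_k ≤ Λ, ν_k = κ²Λ^{1-2a}k² otherwise, with μ satisfying K⁻¹k^{1/a} ≤ μ_k ≤ Kk^{1/a}, κ = K^a, 1/2 ≤ a < 1), there exist constants C₁, C₂ > 0, independent of Λ ≥ μ_1 and Γ ≥ μ_1, such that C₁ Γ^{1/2} ≤ N_ν(Γ) ≤ C₂ Γ^{1/2} Λ^{(2a-1)/2}. -/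
theorem stmt_8 (μ : ℕ → ℝ) (a K κ : ℝ)
    (hmono : StrictMono μ) (hμ1 : 1 ≤ μ 1)
    (ha : (1:ℝ)/2 ≤ a) (ha' : a < 1) (hK : 1 ≤ K) (hκ : κ = K ^ a)
    (hWeyl : ∀ k : ℕ, 1 ≤ k → K⁻¹ * (k : ℝ) ^ (1 / a) ≤ μ k ∧ μ k ≤ K * (k : ℝ) ^ (1 / a)) :
    ∃ C₁ C₂ : ℝ, 0 < C₁ ∧ 0 < C₂ ∧
      ∀ Λ : ℝ, μ 1 ≤ Λ → ∀ Γ : ℝ, μ 1 ≤ Γ →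
        C₁ * Γ ^ ((1:ℝ)/2) ≤
          (({k : ℕ | 1 ≤ k ∧
            (if μ k ≤ Λ then μ k else κ ^ 2 * Λ ^ (1 - 2 * a) * (k : ℝ) ^ 2) ≤ Γ}).ncard : ℝ) ∧
        (({k : ℕ | 1 ≤ k ∧
            (if μ k ≤ Λ then μ k else κ ^ 2 * Λ ^ (1 - 2 * a) * (k : ℝ) ^ 2) ≤ Γ}).ncard : ℝ)
          ≤ C₂ * Γ ^ ((1:ℝ)/2) * Λ ^ ((2 * a - 1) / 2) := by
  have ha0 : (0:ℝ) < a := by linarith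
  have hK0 : (0:ℝ) < K := by linarith
  have hKa1 : (1:ℝ) ≤ K ^ a := by
    calc (1:ℝ) = K ^ (0:ℝ) := (Real.rpow_zero K).symm
    _ ≤ K ^ a := Real.rpow_le_rpow_of_exponent_le hK ha0.le
  have hKa0 : (0:ℝ) < K ^ a := lt_of_lt_of_le one_pos hKa1
  have hκ2 : κ ^ 2 = K ^ (2 * a) := by
    rw [hκ, ← Real.rpow_natCast (K ^ a) 2, ← Real.rpow_mul hK0.le]
    norm_num [mul_comm]
  have hsq : ∀ x : ℝ, 0 < x → ∀ b : ℝ, (x ^ b) ^ 2 = x ^ (2 * b) := by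
    intro x hx b
    rw [← Real.rpow_natCast (x ^ b) 2, ← Real.rpow_mul hx.le]
    norm_num [mul_comm]
  refine ⟨(K ^ a)⁻¹ / 2, K ^ a, by positivity, hKa0, ?_⟩
  intro Λ hΛ Γ hΓ
  have hΛ1 : (1:ℝ) ≤ Λ := le_trans hμ1 hΛ
  have hΓ1 : (1:ℝ) ≤ Γ := le_trans hμ1 hΓ
  have hΛ0 : (0:ℝ) < Λ := lt_of_lt_of_le one_pos hΛ1
  have hΓ0 : (0:ℝ) < Γ := lt_of_lt_of_le one_pos hΓ1
  set S : Set ℕ := {k : ℕ | 1 ≤ k ∧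
      (if μ k ≤ Λ then μ k else κ ^ 2 * Λ ^ (1 - 2 * a) * (k : ℝ) ^ 2) ≤ Γ} with hSdef
  have hμk1 : ∀ k : ℕ, 1 ≤ k → 1 ≤ μ k := fun k hk => le_trans hμ1 (hmono.monotone hk)
  -- the upper cutoff
  set M : ℝ := K ^ a * (Γ ^ ((1:ℝ)/2) * Λ ^ ((2 * a - 1) / 2)) with hMdef
  have hM0 : 0 < M := by positivity
  have key : ∀ k ∈ S, (k : ℝ) ≤ M := by
    rintro k ⟨hk1, hk2⟩
    have hμk : (1:ℝ) ≤ μ k := hμk1 k hk1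
    have hμk0 : (0:ℝ) < μ k := lt_of_lt_of_le one_pos hμk
    obtain ⟨hW1, hW2⟩ := hWeyl k hk1
    by_cases hcase : μ k ≤ Λ
    · rw [if_pos hcase] at hk2
      have h1 : (k:ℝ) ^ ((1:ℝ)/a) ≤ K * μ k := by
        have h := mul_le_mul_of_nonneg_left hW1 hK0.le
        rwa [← mul_assoc, mul_inv_cancel₀ hK0.ne', one_mul] at h
      have hkk : ((k:ℝ) ^ ((1:ℝ)/a)) ^ a = (k:ℝ) := by
        rw [← Real.rpow_mul (Nat.cast_nonneg k), one_div_mul_cancel ha0.ne', Real.rpow_one]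
      have h2 : (k:ℝ) ≤ K ^ a * μ k ^ a := by
        have h := Real.rpow_le_rpow (by positivity) h1 ha0.le
        rwa [hkk, Real.mul_rpow hK0.le hμk0.le] at h
      have h3 : μ k ^ a = μ k ^ ((1:ℝ)/2) * μ k ^ ((2 * a - 1)/2) := by
        rw [← Real.rpow_add hμk0]; congr 1; ring
      calc (k:ℝ) ≤ K ^ a * μ k ^ a := h2
      _ = K ^ a * (μ k ^ ((1:ℝ)/2) * μ k ^ ((2 * a - 1)/2)) := by rw [h3]
      _ ≤ K ^ a * (Γ ^ ((1:ℝ)/2) * Λ ^ ((2 * a - 1)/2)) := by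
          have e1 : μ k ^ ((1:ℝ)/2) ≤ Γ ^ ((1:ℝ)/2) :=
            Real.rpow_le_rpow hμk0.le hk2 (by norm_num)
          have e2 : μ k ^ ((2 * a - 1)/2) ≤ Λ ^ ((2 * a - 1)/2) :=
            Real.rpow_le_rpow hμk0.le hcase (by linarith)
          have e3 : (0:ℝ) ≤ μ k ^ ((1:ℝ)/2) := by positivity
          have e4 : (0:ℝ) ≤ Γ ^ ((1:ℝ)/2) := by positivity
          nlinarith [mul_le_mul e1 e2 (by positivity) e4]
    · rw [if_neg hcase, hκ2] at hk2
      set R : ℝ := (K ^ a)⁻¹ * (Γ ^ ((1:ℝ)/2) * Λ ^ ((2 * a - 1) / 2)) with hRdef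
      have hR0 : 0 < R := by positivity
      have hP0 : (0:ℝ) < K ^ (2 * a) := by positivity
      have hQ0 : (0:ℝ) < Λ ^ (2 * a - 1) := by positivity
      have hΛinv : Λ ^ (1 - 2 * a) = (Λ ^ (2 * a - 1))⁻¹ := by
        rw [show (1 - 2 * a) = -(2 * a - 1) by ring, Real.rpow_neg hΛ0.le]
      have hRsq : R ^ 2 = (K ^ (2 * a))⁻¹ * (Γ * Λ ^ (2 * a - 1)) := by
        have e1 : ((K ^ a)⁻¹) ^ 2 = (K ^ (2 * a))⁻¹ := by
          rw [inv_pow, hsq K hK0 a]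
        have e2 : (Γ ^ ((1:ℝ)/2)) ^ 2 = Γ := by
          rw [hsq Γ hΓ0 ((1:ℝ)/2)]; norm_num
        have e3 : (Λ ^ ((2 * a - 1)/2)) ^ 2 = Λ ^ (2 * a - 1) := by
          rw [hsq Λ hΛ0 ((2 * a - 1)/2)]; congr 1; ring
        calc R ^ 2 = ((K ^ a)⁻¹) ^ 2 * ((Γ ^ ((1:ℝ)/2)) ^ 2 * (Λ ^ ((2 * a - 1)/2)) ^ 2) := by
              rw [hRdef]; ring
        _ = (K ^ (2 * a))⁻¹ * (Γ * Λ ^ (2 * a - 1)) := by rw [e1, e2, e3]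
      have hk2' : (k:ℝ) ^ 2 ≤ R ^ 2 := by
        rw [hΛinv] at hk2
        rw [hRsq]
        have h := mul_le_mul_of_nonneg_right hk2
          (by positivity : (0:ℝ) ≤ Λ ^ (2 * a - 1) * (K ^ (2 * a))⁻¹)
        calc (k:ℝ) ^ 2
            = K ^ (2 * a) * (Λ ^ (2 * a - 1))⁻¹ * (k:ℝ) ^ 2 *
              (Λ ^ (2 * a - 1) * (K ^ (2 * a))⁻¹) := by
              field_simp
        _ ≤ Γ * (Λ ^ (2 * a - 1) * (K ^ (2 * a))⁻¹) := h
        _ = (K ^ (2 * a))⁻¹ * (Γ * Λ ^ (2 * a - 1)) := by ring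
      have hkR : (k:ℝ) ≤ R := by
        exact le_of_pow_le_pow_left₀ two_ne_zero hR0.le hk2'
      calc (k:ℝ) ≤ R := hkR
      _ ≤ M := by
          rw [hRdef, hMdef]
          apply mul_le_mul_of_nonneg_right _ (by positivity)
          calc (K ^ a)⁻¹ ≤ 1 := inv_le_one_of_one_le₀ hKa1
          _ ≤ K ^ a := hKa1
  -- S is contained in an interval
  have hsub : S ⊆ Set.Icc 1 ⌊M⌋₊ := by
    intro k hk
    exact Set.mem_Icc.mpr ⟨hk.1, Nat.le_floor (key k hk)⟩
  have hfin : S.Finite := (Set.finite_Icc _ _).subset hsub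
  have hIccCard : ∀ n : ℕ, 1 ≤ n → (Set.Icc 1 n).ncard = n := by
    intro n hn
    rw [← Finset.coe_Icc, Set.ncard_coe_finset, Nat.card_Icc]
    omega
  constructor
  · -- lower bound
    set x : ℝ := (K ^ a)⁻¹ * Γ ^ ((1:ℝ)/2) with hxdef
    have hx0 : 0 < x := by positivity
    have key2 : ∀ k : ℕ, 1 ≤ k → (k:ℝ) ≤ x → k ∈ S := by
      intro k hk1 hkx
      obtain ⟨hW1, hW2⟩ := hWeyl k hk1
      refine ⟨hk1, ?_⟩
      by_cases hcase : μ k ≤ Λ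
      · rw [if_pos hcase]
        have h1 : (k:ℝ) ^ ((1:ℝ)/a) ≤ x ^ ((1:ℝ)/a) :=
          Real.rpow_le_rpow (Nat.cast_nonneg k) hkx (by positivity)
        have h2 : x ^ ((1:ℝ)/a) = K⁻¹ * Γ ^ (1/(2*a)) := by
          rw [hxdef, Real.mul_rpow (by positivity) (by positivity)]
          congr 1
          · rw [Real.inv_rpow (by positivity : (0:ℝ) ≤ K ^ a), ← Real.rpow_mul hK0.le,
              mul_one_div, div_self ha0.ne', Real.rpow_one]
          · rw [← Real.rpow_mul hΓ0.le]
            congr 1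
            field_simp
        have h3 : μ k ≤ Γ ^ (1/(2*a)) := by
          calc μ k ≤ K * (k:ℝ) ^ ((1:ℝ)/a) := hW2
          _ ≤ K * (K⁻¹ * Γ ^ (1/(2*a))) := by
              rw [← h2]; exact mul_le_mul_of_nonneg_left h1 hK0.le
          _ = Γ ^ (1/(2*a)) := by field_simp
        refine le_trans h3 ?_
        calc Γ ^ (1/(2*a)) ≤ Γ ^ (1:ℝ) := by
              apply Real.rpow_le_rpow_of_exponent_le hΓ1
              rw [div_le_one (by linarith)]; linarith
        _ = Γ := Real.rpow_one Γ
      · rw [if_neg hcase, hκ2]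
        have hxsq : x ^ 2 = (K ^ (2*a))⁻¹ * Γ := by
          have e1 : ((K ^ a)⁻¹) ^ 2 = (K ^ (2 * a))⁻¹ := by
            rw [inv_pow, hsq K hK0 a]
          have e2 : (Γ ^ ((1:ℝ)/2)) ^ 2 = Γ := by
            rw [hsq Γ hΓ0 ((1:ℝ)/2)]; norm_num
          calc x ^ 2 = ((K ^ a)⁻¹) ^ 2 * (Γ ^ ((1:ℝ)/2)) ^ 2 := by rw [hxdef]; ring
          _ = (K ^ (2*a))⁻¹ * Γ := by rw [e1, e2]
        have hx2 : (k:ℝ) ^ 2 ≤ (K ^ (2*a))⁻¹ * Γ := by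
          rw [← hxsq]
          exact pow_le_pow_left₀ (Nat.cast_nonneg k) hkx 2
        have hΛe : Λ ^ (1 - 2 * a) ≤ 1 :=
          Real.rpow_le_one_of_one_le_of_nonpos hΛ1 (by linarith)
        have hΛp : (0:ℝ) < Λ ^ (1 - 2 * a) := by positivity
        have hPp : (0:ℝ) < K ^ (2 * a) := by positivity
        calc K ^ (2 * a) * Λ ^ (1 - 2 * a) * (k:ℝ) ^ 2
            ≤ K ^ (2 * a) * Λ ^ (1 - 2 * a) * ((K ^ (2*a))⁻¹ * Γ) := by
              apply mul_le_mul_of_nonneg_left hx2 (by positivity)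
        _ = Λ ^ (1 - 2 * a) * Γ := by field_simp
        _ ≤ 1 * Γ := mul_le_mul_of_nonneg_right hΛe hΓ0.le
        _ = Γ := one_mul Γ
    set m : ℕ := max 1 ⌊x⌋₊ with hmdef
    have hm1 : 1 ≤ m := le_max_left _ _
    have hsub2 : Set.Icc 1 m ⊆ S := by
      intro k hk
      obtain ⟨hk1, hk2⟩ := Set.mem_Icc.mp hk
      rcases le_max_iff.mp (le_trans hk2 (le_refl m)) with h | h
      · have hk1' : k = 1 := le_antisymm h hk1
        subst hk1'
        exact ⟨le_refl 1, by rw [if_pos hΛ]; exact hΓ⟩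
      · exact key2 k hk1 (le_trans (by exact_mod_cast h) (Nat.floor_le hx0.le))
    have hcard : m ≤ S.ncard := by
      calc m = (Set.Icc 1 m).ncard := (hIccCard m hm1).symm
      _ ≤ S.ncard := Set.ncard_le_ncard hsub2 hfin
    have hmx : x / 2 ≤ (m:ℝ) := by
      rcases le_or_gt x 2 with h | h
      · have h1 : (1:ℝ) ≤ (m:ℝ) := by exact_mod_cast hm1
        linarith
      · have h1 : x < (⌊x⌋₊:ℝ) + 1 := Nat.lt_floor_add_one x
        have h2 : (⌊x⌋₊:ℝ) ≤ (m:ℝ) := by exact_mod_cast le_max_right 1 ⌊x⌋₊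
        linarith
    calc (K ^ a)⁻¹ / 2 * Γ ^ ((1:ℝ)/2) = x / 2 := by rw [hxdef]; ring
    _ ≤ (m:ℝ) := hmx
    _ ≤ (S.ncard : ℝ) := by exact_mod_cast hcard
  · -- upper bound
    have hcard : S.ncard ≤ ⌊M⌋₊ := by
      calc S.ncard ≤ (Set.Icc 1 ⌊M⌋₊).ncard := Set.ncard_le_ncard hsub (Set.finite_Icc _ _)
      _ = ⌊M⌋₊ + 1 - 1 := by rw [← Finset.coe_Icc, Set.ncard_coe_finset, Nat.card_Icc]
      _ ≤ ⌊M⌋₊ := by omega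
    calc (S.ncard : ℝ) ≤ (⌊M⌋₊ : ℝ) := by exact_mod_cast hcard
    _ ≤ M := Nat.floor_le hM0.le
    _ = K ^ a * Γ ^ ((1:ℝ)/2) * Λ ^ ((2 * a - 1) / 2) := by rw [hMdef]; ring
end

section
/- Let μ be increasing with μ_1 ≥ 1, satisfying the weak gap μ_{k+1} - μ_k ≥ exp(-c_w μ_k^{1/2}) and μ_k ≤ κ²Λ^{1-2a}k² above the cutoff Λ (for 1/2 ≤ a). Define ν_k = μ_k if μ_k ≤ Λ, ν_k = κ²Λ^{1-2a}k² otherwise. Then there exists c > 0, depending only on c_w, a, κ, such that for all Λ ≥ 1 and all k ≥ 1, ν_{k+1} - ν_k ≥ exp(-c Λ^{1/2}). -/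
theorem stmt_9 (μ : ℕ → ℝ) (a κ cw : ℝ)
    (hmono : StrictMono μ) (hμ1 : 1 ≤ μ 1)
    (ha : (1:ℝ)/2 ≤ a) (ha' : a < 1) (hκ : 0 < κ) (hcw : 0 < cw)
    (hweakgap : ∀ k : ℕ, 1 ≤ k → μ (k + 1) - μ k ≥ Real.exp (-cw * (μ k) ^ ((1:ℝ)/2)))
    (hup : ∀ Λ : ℝ, 1 ≤ Λ → ∀ k : ℕ, 1 ≤ k → μ k > Λ →
      μ k ≤ κ ^ 2 * Λ ^ (1 - 2 * a) * (k : ℝ) ^ 2) :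
    ∃ c : ℝ, 0 < c ∧ ∀ Λ : ℝ, 1 ≤ Λ → ∀ k : ℕ, 1 ≤ k →
      (if μ (k + 1) ≤ Λ then μ (k + 1) else κ ^ 2 * Λ ^ (1 - 2 * a) * ((k : ℝ) + 1) ^ 2) -
        (if μ k ≤ Λ then μ k else κ ^ 2 * Λ ^ (1 - 2 * a) * (k : ℝ) ^ 2)
      ≥ Real.exp (-c * Λ ^ ((1:ℝ)/2)) := by
  set c : ℝ := cw + 2 + |Real.log (3 * κ ^ 2)| with hc
  have habs := abs_nonneg (Real.log (3 * κ ^ 2))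
  have hcpos : 0 < c := by positivity
  refine ⟨c, hcpos, ?_⟩
  intro Λ hΛ k hk
  have hΛpos : (0:ℝ) < Λ := lt_of_lt_of_le zero_lt_one hΛ
  set s : ℝ := Λ ^ ((1:ℝ)/2) with hs
  have hs1 : (1:ℝ) ≤ s := Real.one_le_rpow hΛ (by norm_num)
  have hs0 : (0:ℝ) < s := lt_of_lt_of_le zero_lt_one hs1
  have hμk1 : (1:ℝ) ≤ μ k := le_trans hμ1 (hmono.monotone hk)
  -- shared bound when μ k ≤ Λ
  have key : μ k ≤ Λ → Real.exp (-c * s) ≤ μ (k + 1) - μ k := by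
    intro h2
    refine le_trans ?_ (hweakgap k hk)
    apply Real.exp_le_exp.mpr
    have h1 : μ k ^ ((1:ℝ)/2) ≤ s := by
      exact Real.rpow_le_rpow (by linarith) h2 (by norm_num)
    have h2' : (0:ℝ) ≤ μ k ^ ((1:ℝ)/2) :=
      Real.rpow_nonneg (by linarith) _
    nlinarith [mul_le_mul_of_nonneg_left h1 hcw.le, hs0.le]
  by_cases hA : μ (k + 1) ≤ Λ
  · have h2 : μ k ≤ Λ := le_trans (hmono (Nat.lt_succ_self k)).le hA
    rw [if_pos hA, if_pos h2]
    exact key h2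
  · push_neg at hA
    rw [if_neg (not_le.mpr hA)]
    have hbig : μ (k + 1) ≤ κ ^ 2 * Λ ^ (1 - 2 * a) * ((k:ℝ) + 1) ^ 2 := by
      have := hup Λ hΛ (k + 1) (by omega) hA
      push_cast at this ⊢
      linarith
    by_cases hB : μ k ≤ Λ
    · rw [if_pos hB]
      calc Real.exp (-c * s) ≤ μ (k+1) - μ k := key hB
        _ ≤ _ := by linarith
    · rw [if_neg hB]
      -- pure quadratic case
      have hP : (0:ℝ) < Λ ^ (1 - 2 * a) := Real.rpow_pos_of_pos hΛpos _
      have hk3 : (3:ℝ) ≤ 2 * (k:ℝ) + 1 := by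
        have : (1:ℝ) ≤ (k:ℝ) := by exact_mod_cast hk
        linarith
      have e1 : Λ ^ (-1:ℝ) ≤ Λ ^ (1 - 2 * a) :=
        Real.rpow_le_rpow_of_exponent_le hΛ (by linarith)
      -- Λ ≤ exp (2 s)
      have hlog : Real.log Λ ≤ 2 * s := by
        have hsq : Real.sqrt Λ = s := Real.sqrt_eq_rpow Λ
        have := Real.log_sqrt hΛpos.le
        have h3 : Real.log (Real.sqrt Λ) ≤ Real.sqrt Λ - 1 :=
          Real.log_le_sub_one_of_pos (Real.sqrt_pos.mpr hΛpos)
        rw [hsq] at this h3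
        linarith
      have e2 : Real.exp (-(2 * s)) ≤ Λ ^ (-1:ℝ) := by
        rw [Real.rpow_neg_one, ← Real.exp_log hΛpos, ← Real.exp_neg, Real.exp_le_exp]
        linarith
      have e3 : Real.exp (-c * s) ≤ 3 * κ ^ 2 * Real.exp (-(2 * s)) := by
        rw [show (3 * κ ^ 2 : ℝ) = Real.exp (Real.log (3 * κ ^ 2)) from
          (Real.exp_log (by positivity)).symm, ← Real.exp_add, Real.exp_le_exp]
        have h1 : -Real.log (3 * κ ^ 2) ≤ |Real.log (3 * κ ^ 2)| := neg_le_abs _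
        nlinarith
      calc Real.exp (-c * s) ≤ 3 * κ ^ 2 * Real.exp (-(2 * s)) := e3
        _ ≤ 3 * κ ^ 2 * Λ ^ (-1:ℝ) := by nlinarith
        _ ≤ 3 * κ ^ 2 * Λ ^ (1 - 2 * a) := by nlinarith
        _ ≤ κ ^ 2 * Λ ^ (1 - 2 * a) * (2 * (k:ℝ) + 1) := by
              have h := mul_le_mul_of_nonneg_right hk3
                (by positivity : (0:ℝ) ≤ κ ^ 2 * Λ ^ (1 - 2 * a))
              nlinarith [h]
        _ ≤ _ := le_of_eq (by ring)
end

section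
/- (Roth-gap for the rectangle Bi-Laplacian) Let a, b > 0 with z = a²/b² an irrational algebraic number, and suppose that for some ε > 0 there is C_ε > 0 with |z - n/m| ≥ C_ε/m^{2+ε} for all nonzero integers n, m. Let μ < μ' be two distinct eigenvalues of the hinged Bi-Laplacian on (0,a)×(0,b), i.e. μ = π⁴(ℓ²/a² + m²/b²)², μ' = π⁴(ℓ'²/a² + m'²/b²)² with (ℓ,m) ≠ (ℓ',m') positive integers and μ ≠ μ'. Then μ' - μ ≥ (2π^{4+2ε} C_ε / (a² b^{2+2ε})) · μ'^{-ε/2}. -/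
open Real

set_option maxHeartbeats 1000000 in
theorem stmt_10 (a b ε Cε : ℝ) (ha : 0 < a) (hb : 0 < b)
    (hirr : Irrational (a ^ 2 / b ^ 2)) (halg : IsAlgebraic ℚ (a ^ 2 / b ^ 2))
    (hε : 0 < ε) (hC : 0 < Cε)
    (hdioph : ∀ n m : ℤ, n ≠ 0 → m ≠ 0 →
      |a ^ 2 / b ^ 2 - (n : ℝ) / (m : ℝ)| ≥ Cε / (|(m : ℝ)|) ^ (2 + ε))
    (ℓ m ℓ' m' : ℕ) (hℓ : 1 ≤ ℓ) (hm : 1 ≤ m) (hℓ' : 1 ≤ ℓ') (hm' : 1 ≤ m')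
    (hne : (ℓ, m) ≠ (ℓ', m'))
    (μ μ' : ℝ)
    (hμ : μ = π ^ 4 * ((ℓ : ℝ) ^ 2 / a ^ 2 + (m : ℝ) ^ 2 / b ^ 2) ^ 2)
    (hμ' : μ' = π ^ 4 * ((ℓ' : ℝ) ^ 2 / a ^ 2 + (m' : ℝ) ^ 2 / b ^ 2) ^ 2)
    (hlt : μ < μ') :
    μ' - μ ≥ (2 * π ^ (4 + 2 * ε) * Cε / (a ^ 2 * b ^ (2 + 2 * ε))) * μ' ^ (-(ε / 2)) := by
  have hπ : (0:ℝ) < π := pi_pos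
  have ha2 : (0:ℝ) < a^2 := by positivity
  have hb2 : (0:ℝ) < b^2 := by positivity
  set z : ℝ := a^2/b^2 with hzdef
  have hzpos : 0 < z := by positivity
  -- casts
  have hl1 : (1:ℝ) ≤ (ℓ:ℝ) := by exact_mod_cast hℓ
  have hm1 : (1:ℝ) ≤ (m:ℝ) := by exact_mod_cast hm
  have hl'1 : (1:ℝ) ≤ (ℓ':ℝ) := by exact_mod_cast hℓ'
  have hm'1 : (1:ℝ) ≤ (m':ℝ) := by exact_mod_cast hm'
  have hl2 : (1:ℝ) ≤ (ℓ:ℝ)^2 := by nlinarith only [hl1]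
  have hm2 : (1:ℝ) ≤ (m:ℝ)^2 := by nlinarith only [hm1]
  have hl'2 : (1:ℝ) ≤ (ℓ':ℝ)^2 := by nlinarith only [hl'1]
  have hm'2 : (1:ℝ) ≤ (m':ℝ)^2 := by nlinarith only [hm'1]
  have hNcast : ((((ℓ':ℤ)^2 - (ℓ:ℤ)^2):ℤ):ℝ) = (ℓ':ℝ)^2 - (ℓ:ℝ)^2 := by push_cast; ring
  have hMcast : ((((m':ℤ)^2 - (m:ℤ)^2):ℤ):ℝ) = (m':ℝ)^2 - (m:ℝ)^2 := by push_cast; ring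
  set Λ : ℝ := (ℓ:ℝ)^2/a^2 + (m:ℝ)^2/b^2 with hLdef
  set Λ' : ℝ := (ℓ':ℝ)^2/a^2 + (m':ℝ)^2/b^2 with hL'def
  have hΛpos : 0 < Λ := by positivity
  have hΛ'pos : 0 < Λ' := by positivity
  have hΛlt : Λ < Λ' := by
    rw [hμ, hμ'] at hlt
    exact lt_of_pow_lt_pow_left₀ 2 hΛ'pos.le (lt_of_mul_lt_mul_left hlt (by positivity))
  -- Cε ≤ 1
  have hCle : Cε ≤ 1 := by
    have hfl : (0:ℤ) ≤ ⌊z⌋ := Int.le_floor.mpr (by exact_mod_cast hzpos.le)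
    have hne0 : (⌊z⌋ + 1 : ℤ) ≠ 0 := by omega
    have h := hdioph (⌊z⌋ + 1) 1 hne0 one_ne_zero
    simp only [Int.cast_one, abs_one, Real.one_rpow, div_one] at h
    have h1 : z - ((⌊z⌋ + 1 : ℤ):ℝ) < 0 := by
      push_cast
      have := Int.lt_floor_add_one z
      linarith
    have h2 : ((⌊z⌋ + 1 : ℤ):ℝ) - z ≤ 1 := by
      push_cast
      have := Int.floor_le z
      linarith
    rw [abs_of_neg h1] at h
    linarith
  set N : ℤ := (ℓ':ℤ)^2 - (ℓ:ℤ)^2 with hNdef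
  set M : ℤ := (m':ℤ)^2 - (m:ℤ)^2 with hMdef
  set D : ℝ := a^2*(Λ' - Λ) with hDdef
  have hD : D = (N:ℝ) + z*(M:ℝ) := by
    rw [hDdef, hNcast, hMcast, hLdef, hL'def, hzdef]
    field_simp
    ring
  have hDpos : 0 < D := by
    have := sub_pos.mpr hΛlt
    positivity
  set S : ℝ := b^2*(Λ' + Λ) with hSdef
  have hS : S = ((m:ℝ)^2+(m':ℝ)^2) + ((ℓ:ℝ)^2+(ℓ':ℝ)^2)/z := by
    rw [hSdef, hLdef, hL'def, hzdef]
    field_simp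
    ring
  have hdivpos : 0 < ((ℓ:ℝ)^2+(ℓ':ℝ)^2)/z := by positivity
  have hS2 : 2 ≤ S := by
    rw [hS]
    linarith only [hm2, hm'2, hdivpos]
  have hX : b^2*Λ' = (m':ℝ)^2 + ((ℓ':ℝ)^2)/z := by
    rw [hL'def, hzdef]; field_simp; ring
  have hdivpos' : 0 < ((ℓ':ℝ)^2)/z := by positivity
  have hX1 : 1 ≤ b^2*Λ' := by
    rw [hX]
    linarith only [hm'2, hdivpos']
  have hP1 : 1 ≤ (b^2*Λ')^ε := Real.one_le_rpow hX1 hε.le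
  have hSpos : 0 < S := by linarith only [hS2]
  have hNr : (N:ℝ) = (ℓ':ℝ)^2 - (ℓ:ℝ)^2 := hNcast
  have hMr : (M:ℝ) = (m':ℝ)^2 - (m:ℝ)^2 := hMcast
  -- the core inequality
  have core : 2*Cε ≤ (b^2*Λ')^ε * (S * D) := by
    by_cases hD1 : 1 ≤ D
    · have h1 : 2 ≤ S * D := by nlinarith only [hS2, hD1]
      calc 2*Cε ≤ 2 := by linarith only [hCle, hC]
        _ ≤ 1 * (S*D) := by linarith only [h1]
        _ ≤ (b^2*Λ')^ε * (S*D) :=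
            mul_le_mul_of_nonneg_right hP1 (by linarith only [h1])
    · push_neg at hD1
      by_cases hM0 : M = 0
      · exfalso
        rw [hM0] at hD
        simp at hD
        have hN1 : (1:ℝ) ≤ (N:ℝ) := by
          have h0 : (0:ℝ) < (N:ℝ) := by linarith only [hDpos, hD]
          have : (0:ℤ) < N := by exact_mod_cast h0
          exact_mod_cast this
        linarith only [hN1, hD1, hD]
      · by_cases hN0 : N = 0
        · -- D = z*M, M ≥ 1
          have hDe : D = z*(M:ℝ) := by rw [hD, hN0]; push_cast; ring
          have hMpos : (0:ℝ) < (M:ℝ) := by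
            by_contra hcon
            push_neg at hcon
            have h := mul_nonpos_of_nonneg_of_nonpos hzpos.le hcon
            linarith only [h, hDe, hDpos]
          have hM1 : (1:ℝ) ≤ (M:ℝ) := by
            have : (0:ℤ) < M := by exact_mod_cast hMpos
            exact_mod_cast this
          have e1 : ((ℓ:ℝ)^2+(ℓ':ℝ)^2)/z ≤ S := by
            rw [hS]; linarith only [hm2, hm'2]
          have h1 : 2 ≤ S * D := by
            have e2 : ((ℓ:ℝ)^2+(ℓ':ℝ)^2)/z * D = ((ℓ:ℝ)^2+(ℓ':ℝ)^2)*(M:ℝ) := by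
              rw [hDe]; field_simp
            have e3 : ((ℓ:ℝ)^2+(ℓ':ℝ)^2)/z * D ≤ S * D :=
              mul_le_mul_of_nonneg_right e1 hDpos.le
            have e4 : 2 ≤ ((ℓ:ℝ)^2+(ℓ':ℝ)^2)*(M:ℝ) := by
              nlinarith only [hl2, hl'2, hM1]
            linarith only [e2, e3, e4]
          calc 2*Cε ≤ 2 := by linarith only [hCle, hC]
            _ ≤ 1 * (S*D) := by linarith only [h1]
            _ ≤ (b^2*Λ')^ε * (S*D) :=
                mul_le_mul_of_nonneg_right hP1 (by linarith only [h1])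
        · -- main Diophantine case
          have hMne : ((M:ℝ)) ≠ 0 := Int.cast_ne_zero.mpr hM0
          have habsM : 0 < |(M:ℝ)| := abs_pos.mpr hMne
          have hdio := hdioph (-N) M (neg_ne_zero.mpr hN0) hM0
          have heq : z - ((-N:ℤ):ℝ)/(M:ℝ) = D/(M:ℝ) := by
            rw [hD]; push_cast; field_simp; ring
          rw [heq, abs_div, abs_of_pos hDpos] at hdio
          have hkey : Cε ≤ D * |(M:ℝ)|^(1+ε) := by
            rw [ge_iff_le, div_le_div_iff₀ (by positivity) habsM] at hdio
            have h2e : |(M:ℝ)|^(2+ε) = |(M:ℝ)| * |(M:ℝ)|^(1+ε) := by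
              rw [show (2+ε) = 1+(1+ε) by ring, Real.rpow_add habsM, Real.rpow_one]
            rw [h2e] at hdio
            refine le_of_mul_le_mul_right ?_ habsM
            calc Cε * |(M:ℝ)| ≤ D * (|(M:ℝ)| * |(M:ℝ)|^(1+ε)) := hdio
              _ = D * |(M:ℝ)|^(1+ε) * |(M:ℝ)| := by ring
          have hzM : z * |(M:ℝ)| ≤ (ℓ:ℝ)^2 + (ℓ':ℝ)^2 := by
            rcases lt_or_gt_of_ne hM0 with hMneg | hMpos
            · have hMrneg : (M:ℝ) < 0 := by exact_mod_cast hMneg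
              rw [abs_of_neg hMrneg]
              have : z * -(M:ℝ) = (N:ℝ) - D := by linarith only [hD]
              rw [this, hNr]
              linarith only [hDpos, hl2]
            · have hMrpos : (0:ℝ) < (M:ℝ) := by exact_mod_cast hMpos
              rw [abs_of_pos hMrpos]
              have : z * (M:ℝ) = D - (N:ℝ) := by linarith only [hD]
              rw [this, hNr]
              linarith only [hD1, hl'2]
          have hSM : 2*|(M:ℝ)| ≤ S := by
            have hma : |(M:ℝ)| ≤ (m:ℝ)^2+(m':ℝ)^2 := by
              rw [abs_le]
              constructor
              · rw [hMr]; linarith only [hm2, hm'2]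
              · rw [hMr]; linarith only [hm2, hm'2]
            have hlb : |(M:ℝ)| ≤ ((ℓ:ℝ)^2+(ℓ':ℝ)^2)/z := by
              rw [le_div_iff₀ hzpos]
              linarith only [hzM]
            rw [hS]; linarith only [hma, hlb]
          have hXM : |(M:ℝ)| ≤ b^2*Λ' := by
            rcases lt_or_gt_of_ne hM0 with hMneg | hMpos
            · have hMrneg : (M:ℝ) < 0 := by exact_mod_cast hMneg
              rw [abs_of_neg hMrneg, hX]
              have h1 : z * (-(M:ℝ)) ≤ (ℓ':ℝ)^2 := by
                have : z * -(M:ℝ) = (N:ℝ) - D := by linarith only [hD]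
                rw [this, hNr]
                linarith only [hDpos, hl2]
              have h2 : -(M:ℝ) ≤ ((ℓ':ℝ)^2)/z := by
                rw [le_div_iff₀ hzpos]
                linarith only [h1]
              have : (0:ℝ) ≤ (m':ℝ)^2 := by positivity
              linarith only [h2, this]
            · have hMrpos : (0:ℝ) < (M:ℝ) := by exact_mod_cast hMpos
              rw [abs_of_pos hMrpos, hX, hMr]
              linarith only [hm2, hdivpos']
          have hPM : |(M:ℝ)|^ε ≤ (b^2*Λ')^ε :=
            Real.rpow_le_rpow (abs_nonneg _) hXM hε.le
          have h1pe : |(M:ℝ)|^(1+ε) = |(M:ℝ)| * |(M:ℝ)|^ε := by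
            rw [Real.rpow_add habsM, Real.rpow_one]
          have hMeps : 0 ≤ |(M:ℝ)|^ε := (Real.rpow_pos_of_pos habsM _).le
          calc 2*Cε ≤ 2*(D*|(M:ℝ)|^(1+ε)) := by linarith only [hkey]
            _ = (|(M:ℝ)|^ε) * ((2*|(M:ℝ)|) * D) := by rw [h1pe]; ring
            _ ≤ (|(M:ℝ)|^ε) * (S * D) :=
                mul_le_mul_of_nonneg_left (mul_le_mul_of_nonneg_right hSM hDpos.le) hMeps
            _ ≤ (b^2*Λ')^ε * (S*D) := by
                refine mul_le_mul_of_nonneg_right hPM ?_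
                exact mul_nonneg hSpos.le hDpos.le
  -- reduce goal to core
  have hbsplit : b ^ (2 + 2*ε) = b^2 * (b^2)^ε := by
    rw [Real.rpow_add hb]
    congr 1
    · rw [show (2:ℝ) = ((2:ℕ):ℝ) by norm_num, Real.rpow_natCast]
    · rw [← Real.rpow_natCast b 2, ← Real.rpow_mul hb.le]
      norm_num [mul_comm]
  have hpsplit : π ^ (4 + 2*ε) = π^4 * π^(2*ε) := by
    rw [Real.rpow_add hπ]
    congr 1
    rw [show (4:ℝ) = ((4:ℕ):ℝ) by norm_num, Real.rpow_natCast]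
  have hmu : μ' ^ (-(ε/2)) = (π^(2*ε))⁻¹ * (Λ'^ε)⁻¹ := by
    rw [hμ', Real.mul_rpow (by positivity) (by positivity)]
    congr 1
    · rw [← Real.rpow_natCast π 4, ← Real.rpow_mul hπ.le, ← Real.rpow_neg_one (π^(2*ε)),
        ← Real.rpow_mul hπ.le]
      norm_num
      ring_nf
    · rw [← Real.rpow_natCast Λ' 2, ← Real.rpow_mul hΛ'pos.le, ← Real.rpow_neg_one (Λ'^ε),
        ← Real.rpow_mul hΛ'pos.le]
      norm_num
      ring_nf
  have hw : 0 < π^(2*ε) := Real.rpow_pos_of_pos hπ _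
  have hu : 0 < (b^2)^ε := Real.rpow_pos_of_pos hb2 _
  have hv : 0 < Λ'^ε := Real.rpow_pos_of_pos hΛ'pos _
  have hrhs : (2 * π ^ (4 + 2 * ε) * Cε / (a ^ 2 * b ^ (2 + 2 * ε))) * μ' ^ (-(ε / 2))
      = 2*Cε*π^4/(a^2*b^2*((b^2)^ε * Λ'^ε)) := by
    rw [hmu, hpsplit, hbsplit]
    field_simp
  have core2 : 2*Cε ≤ ((b^2)^ε * Λ'^ε) * (a^2*b^2*(Λ'^2-Λ^2)) := by
    have hsplit : (b^2*Λ')^ε = (b^2)^ε * Λ'^ε := Real.mul_rpow hb2.le hΛ'pos.le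
    have hSD : S * D = a^2*b^2*((Λ'+Λ)*(Λ'-Λ)) := by rw [hSdef, hDdef]; ring
    calc 2*Cε ≤ (b^2*Λ')^ε * (S*D) := core
      _ = ((b^2)^ε * Λ'^ε) * (a^2*b^2*(Λ'^2-Λ^2)) := by rw [hsplit, hSD]; ring
  rw [ge_iff_le, hrhs, hμ, hμ', div_le_iff₀ (by positivity)]
  have hπ4 : (0:ℝ) < π^4 := by positivity
  have hfin : 2*Cε*π^4 ≤ (π^4*Λ'^2 - π^4*Λ^2) * (a^2*b^2*((b^2)^ε*Λ'^ε)) := by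
    calc 2*Cε*π^4 ≤ (((b^2)^ε * Λ'^ε) * (a^2*b^2*(Λ'^2-Λ^2))) * π^4 :=
          mul_le_mul_of_nonneg_right core2 hπ4.le
      _ = (π^4*Λ'^2 - π^4*Λ^2) * (a^2*b^2*((b^2)^ε*Λ'^ε)) := by ring
  linarith only [hfin]
end

section
/- For every positive integer ℓ there exists C > 0 such that for all positive integers k, |∫₀¹ t² sin(kπt) sin(ℓπt) dt| ≥ C/k³. -/
/-! For `k ≠ ℓ` the product-to-sum formula and the antiderivative of `t² cos(ct)` give the exact
value `∫₀¹ t² sin(kπt) sin(ℓπt) dt = ± 4kℓ / ((k² - ℓ²)² π²)`, and `(k² - ℓ²)² ≤ (kℓ)⁴` turns this into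
a lower bound `4 / (ℓ³π² k³)`. On the diagonal the integral is `1/6 - 1/(4ℓ²π²)`, which is
bounded away from `0`. Hence `C = 1 / (ℓ³π²)` works. -/

open Real intervalIntegral

theorem integral_sq_mul_cos {c : ℝ} (hc : c ≠ 0) :
    ∫ t in (0:ℝ)..1, t ^ 2 * cos (c * t)
      = sin c / c + 2 * cos c / c ^ 2 - 2 * sin c / c ^ 3 := by
  have hderiv : ∀ t ∈ Set.uIcc (0:ℝ) 1, HasDerivAt
      (fun t : ℝ => t ^ 2 * sin (c * t) / c + 2 * t * cos (c * t) / c ^ 2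
        - 2 * sin (c * t) / c ^ 3)
      (t ^ 2 * cos (c * t)) t := by
    intro t _
    have hlin : HasDerivAt (fun t : ℝ => c * t) c t := by
      simpa using (hasDerivAt_id t).const_mul c
    have hsin := hlin.sin
    have hcos := hlin.cos
    have h := ((((hasDerivAt_pow 2 t).mul hsin).div_const c).add
      ((((hasDerivAt_id t).const_mul 2).mul hcos).div_const (c ^ 2))).sub
      ((hsin.const_mul 2).div_const (c ^ 3))
    refine h.congr_deriv ?_
    simp only [id]
    field_simp
    ring
  rw [integral_eq_sub_of_hasDerivAt hderiv (by apply Continuous.intervalIntegrable; fun_prop)]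
  norm_num

theorem integral_sq_mul_cos_int_mul_pi {n : ℤ} (hn : n ≠ 0) :
    ∫ t in (0:ℝ)..1, t ^ 2 * cos (n * π * t) = 2 * (-1) ^ n / (n ^ 2 * π ^ 2) := by
  have hc : (n : ℝ) * π ≠ 0 := mul_ne_zero (Int.cast_ne_zero.mpr hn) pi_ne_zero
  rw [integral_sq_mul_cos hc, sin_int_mul_pi, cos_int_mul_pi]
  field_simp
  ring

theorem integral_sq_mul_sin_mul_sin (x y : ℝ) :
    ∫ t in (0:ℝ)..1, t ^ 2 * sin (x * t) * sin (y * t)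
      = ((∫ t in (0:ℝ)..1, t ^ 2 * cos ((x - y) * t))
        - ∫ t in (0:ℝ)..1, t ^ 2 * cos ((x + y) * t)) / 2 := by
  rw [← integral_sub (by apply Continuous.intervalIntegrable; fun_prop)
      (by apply Continuous.intervalIntegrable; fun_prop), ← integral_div]
  refine integral_congr fun t _ => ?_
  have h := two_mul_sin_mul_sin (x * t) (y * t)
  rw [sub_mul, add_mul]
  linear_combination (t ^ 2 / 2) * h

theorem integral_sq_mul_sin_nat_mul_pi_mul_sin_of_ne {k ℓ : ℕ} (hkℓ : k ≠ ℓ) :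
    ∫ t in (0:ℝ)..1, t ^ 2 * sin (k * π * t) * sin (ℓ * π * t)
      = (-1) ^ (k + ℓ) * (4 * k * ℓ / (((k:ℝ) ^ 2 - ℓ ^ 2) ^ 2 * π ^ 2)) := by
  have hdiff : ((k:ℤ) - ℓ) ≠ 0 := by omega
  have hsum : ((k:ℤ) + ℓ) ≠ 0 := by omega
  have hsign : ((-1:ℝ)) ^ ((k:ℤ) - ℓ) = (-1) ^ (k + ℓ) := by
    rw [show (k:ℤ) - ℓ = ((k + ℓ : ℕ) : ℤ) + (-2) * ℓ by push_cast; ring,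
      zpow_add₀ (by norm_num), zpow_mul, zpow_natCast]
    norm_num
  rw [integral_sq_mul_sin_mul_sin, ← sub_mul, ← add_mul]
  have hdiff' := integral_sq_mul_cos_int_mul_pi hdiff
  have hsum' := integral_sq_mul_cos_int_mul_pi hsum
  push_cast at hdiff' hsum'
  rw [hdiff', hsum', hsign, show ((k:ℤ) + ℓ : ℤ) = ((k + ℓ : ℕ) : ℤ) by push_cast; ring,
    zpow_natCast]
  have hd : (k:ℝ) - ℓ ≠ 0 := by exact_mod_cast hdiff
  have hs : (k:ℝ) + ℓ ≠ 0 := by exact_mod_cast hsum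
  have hsq : (k:ℝ) ^ 2 - ℓ ^ 2 = (k - ℓ) * (k + ℓ) := by ring
  rw [hsq]
  field_simp
  ring

theorem integral_sq_mul_sin_nat_mul_pi_mul_sin_self {ℓ : ℕ} (hℓ : ℓ ≠ 0) :
    ∫ t in (0:ℝ)..1, t ^ 2 * sin (ℓ * π * t) * sin (ℓ * π * t)
      = 1 / 6 - 1 / (4 * ℓ ^ 2 * π ^ 2) := by
  have hsum := integral_sq_mul_cos_int_mul_pi (n := ℓ + ℓ) (by omega)
  push_cast at hsum
  rw [integral_sq_mul_sin_mul_sin, sub_self, ← add_mul, hsum,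
    show ((ℓ:ℤ) + ℓ : ℤ) = ((2 * ℓ : ℕ) : ℤ) by push_cast; ring, zpow_natCast, pow_mul]
  have hℓ' : (ℓ:ℝ) ≠ 0 := by exact_mod_cast hℓ
  simp only [zero_mul, cos_zero, mul_one, integral_pow, even_two, Even.neg_pow, one_pow]
  field_simp
  ring

theorem sq_sub_sq_sq_le_mul_pow_four {x y : ℝ} (hx : 1 ≤ x) (hy : 1 ≤ y) :
    (x ^ 2 - y ^ 2) ^ 2 ≤ (x * y) ^ 4 := by
  have hlo : -(x * y) ^ 2 ≤ x ^ 2 - y ^ 2 := by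
    nlinarith [mul_le_mul hx hx zero_le_one (by linarith)]
  have hhi : x ^ 2 - y ^ 2 ≤ (x * y) ^ 2 := by
    nlinarith [mul_le_mul hy hy zero_le_one (by linarith)]
  have := sq_le_sq' hlo hhi
  linarith [show ((x * y) ^ 2) ^ 2 = (x * y) ^ 4 by ring]

theorem one_div_mul_pi_sq_div_pow_three_le_of_ne {x y : ℝ} (hx : 1 ≤ x) (hy : 1 ≤ y)
    (hxy : x ≠ y) : 1 / (y ^ 3 * π ^ 2) / x ^ 3 ≤ 4 * x * y / ((x ^ 2 - y ^ 2) ^ 2 * π ^ 2) := by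
  have hgap : 0 < (x ^ 2 - y ^ 2) ^ 2 :=
    sq_pos_of_ne_zero (sub_ne_zero.mpr ((sq_eq_sq₀ (by linarith) (by linarith)).not.mpr hxy))
  calc 1 / (y ^ 3 * π ^ 2) / x ^ 3 ≤ 4 * x * y / ((x * y) ^ 4 * π ^ 2) := by
        rw [div_div, div_le_div_iff₀ (by positivity) (by positivity)]
        have : 0 ≤ (x * y) ^ 4 * π ^ 2 := by positivity
        linarith [show 4 * x * y * (y ^ 3 * π ^ 2 * x ^ 3) = 4 * ((x * y) ^ 4 * π ^ 2) by ring]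
    _ ≤ 4 * x * y / ((x ^ 2 - y ^ 2) ^ 2 * π ^ 2) := by
        gcongr
        exact sq_sub_sq_sq_le_mul_pow_four hx hy

theorem one_div_mul_pi_sq_div_pow_three_le_self {x : ℝ} (hx : 1 ≤ x) :
    1 / (x ^ 3 * π ^ 2) / x ^ 3 ≤ 1 / 6 - 1 / (4 * x ^ 2 * π ^ 2) := by
  have hπ : 9 < π ^ 2 := by nlinarith [pi_gt_three]
  have hx6 : 1 ≤ x ^ 3 * x ^ 3 := one_le_mul_of_one_le_of_one_le (one_le_pow₀ hx) (one_le_pow₀ hx)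
  have hfirst : 1 / (x ^ 3 * π ^ 2) / x ^ 3 ≤ 1 / π ^ 2 := by
    rw [div_div]
    gcongr
    nlinarith
  have hsecond : 1 / (4 * x ^ 2 * π ^ 2) ≤ 1 / (4 * π ^ 2) := by
    gcongr
    nlinarith
  have hsum : 1 / π ^ 2 + 1 / (4 * π ^ 2) ≤ 1 / 6 := by
    rw [show 1 / π ^ 2 + 1 / (4 * π ^ 2) = 5 / (4 * π ^ 2) by field_simp; ring,
      div_le_div_iff₀ (by positivity) (by norm_num)]
    linarith
  linarith

theorem stmt_13 (ℓ : ℕ) (hℓ : 1 ≤ ℓ) :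
    ∃ C : ℝ, 0 < C ∧ ∀ k : ℕ, 1 ≤ k →
      |∫ t in (0:ℝ)..1, t ^ 2 * Real.sin (k * π * t) * Real.sin (ℓ * π * t)| ≥
        C / (k : ℝ) ^ 3 := by
  refine ⟨1 / ((ℓ:ℝ) ^ 3 * π ^ 2), by positivity, fun k hk => ?_⟩
  have hℓ1 : (1:ℝ) ≤ ℓ := by exact_mod_cast hℓ
  have hk1 : (1:ℝ) ≤ k := by exact_mod_cast hk
  rcases eq_or_ne k ℓ with rfl | hkℓ
  · rw [integral_sq_mul_sin_nat_mul_pi_mul_sin_self (by omega), ge_iff_le]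
    exact (one_div_mul_pi_sq_div_pow_three_le_self hℓ1).trans (le_abs_self _)
  · rw [integral_sq_mul_sin_nat_mul_pi_mul_sin_of_ne hkℓ, abs_mul, abs_pow, abs_neg, abs_one,
      one_pow, one_mul, ge_iff_le]
    exact (one_div_mul_pi_sq_div_pow_three_le_of_ne hk1 hℓ1 (by exact_mod_cast hkℓ)).trans
      (le_abs_self _)
end

section
/- Let λ = (λ_k) be the nondecreasing sequence of Dirichlet Laplacian eigenvalues on the unit square (0,1)², i.e. the multiset {π²(m² + n²) : m, n ∈ ℕ*} arranged in nondecreasing order. For every N ∈ ℕ* there exists k(N) ∈ ℕ* such that the eigenvalue λ_{k(N)} has multiplicity exactly N, i.e. #{ℓ : λ_ℓ = λ_{k(N)}} = N. -/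
/-!
The eigenvalue counting function `Γ ↦ #{k | λ_k ≤ Γ}` equals the number of lattice points
`(m, n) ∈ ℕ*²` with `π²(m² + n²) ≤ Γ`, which is constant on `[π² s, π² (s + 1))`. So the block
of eigenvalues in `(π² s, π² (s + 1)]` is the single value `π² (s + 1)`, repeated as often as
`s + 1` is an ordered sum of two positive squares.

That number is `k + 1` for `s + 1 = 2 · 5ᵏ`. In `ℤ[i]`, every element of norm `5c` is divisible
by `2 + i` or by `2 - i`, and by both exactly when it is divisible by `5`; this gives
`r(5c) = 2 r(c) - r(c / 5)` for the number `r` of integer points on a circle, hence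
`r(5ᵏ) = 4 (k + 1)`. Multiplication by `1 + i` carries these points bijectively to those of
norm `2 · 5ᵏ`, none of which lies on an axis, so each open quadrant contains `k + 1` of them.
-/

open Real

def intCircle (c : ℤ) : Set (ℤ × ℤ) := {p | p.1 ^ 2 + p.2 ^ 2 = c}

theorem intCircle_finite (c : ℤ) : (intCircle c).Finite := by
  refine ((Set.finite_Icc (-c) c).prod (Set.finite_Icc (-c) c)).subset ?_
  rintro ⟨x, y⟩ (h : x ^ 2 + y ^ 2 = c)
  refine ⟨⟨?_, ?_⟩, ?_, ?_⟩ <;>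
    nlinarith [sq_nonneg (x + 1), sq_nonneg (x - 1), sq_nonneg (y + 1), sq_nonneg (y - 1)]

-- Multiplication by the Gaussian integers `2 + i`, `2 - i` and `1 + i`, in coordinates.
def mulTwoAddI (p : ℤ × ℤ) : ℤ × ℤ := (2 * p.1 - p.2, p.1 + 2 * p.2)
def mulTwoSubI (p : ℤ × ℤ) : ℤ × ℤ := (2 * p.1 + p.2, 2 * p.2 - p.1)
def mulOneAddI (p : ℤ × ℤ) : ℤ × ℤ := (p.1 - p.2, p.1 + p.2)

theorem mulTwoAddI_injective : Function.Injective mulTwoAddI := by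
  rintro ⟨a, b⟩ ⟨c, d⟩ h
  simp only [mulTwoAddI, Prod.mk.injEq] at h
  ext <;> dsimp <;> omega

theorem mulTwoSubI_injective : Function.Injective mulTwoSubI := by
  rintro ⟨a, b⟩ ⟨c, d⟩ h
  simp only [mulTwoSubI, Prod.mk.injEq] at h
  ext <;> dsimp <;> omega

theorem mulOneAddI_injective : Function.Injective mulOneAddI := by
  rintro ⟨a, b⟩ ⟨c, d⟩ h
  simp only [mulOneAddI, Prod.mk.injEq] at h
  ext <;> dsimp <;> omega

theorem image_mulTwoAddI_intCircle (c : ℤ) :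
    mulTwoAddI '' intCircle c = {p | p ∈ intCircle (5 * c) ∧ 5 ∣ 2 * p.1 + p.2} := by
  ext ⟨m, n⟩
  simp only [intCircle, Set.mem_image, Set.mem_ofPred_eq, Prod.exists, mulTwoAddI, Prod.mk.injEq]
  constructor
  · rintro ⟨a, b, h, rfl, rfl⟩
    exact ⟨by linear_combination 5 * h, a, by ring⟩
  · rintro ⟨h, t, ht⟩
    refine ⟨t, 2 * t - m, ?_, by ring, by linarith⟩
    refine mul_left_cancel₀ (by norm_num : (5 : ℤ) ≠ 0) ?_
    linear_combination h - (5 * t - 2 * m + n) * ht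

theorem image_mulTwoSubI_intCircle (c : ℤ) :
    mulTwoSubI '' intCircle c = {p | p ∈ intCircle (5 * c) ∧ 5 ∣ 2 * p.1 - p.2} := by
  ext ⟨m, n⟩
  simp only [intCircle, Set.mem_image, Set.mem_ofPred_eq, Prod.exists, mulTwoSubI, Prod.mk.injEq]
  constructor
  · rintro ⟨a, b, h, rfl, rfl⟩
    exact ⟨by linear_combination 5 * h, a, by ring⟩
  · rintro ⟨h, t, ht⟩
    refine ⟨t, m - 2 * t, ?_, by ring, by linarith⟩
    refine mul_left_cancel₀ (by norm_num : (5 : ℤ) ≠ 0) ?_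
    linear_combination h + (2 * m - 5 * t + n) * ht

theorem intCircle_five_mul (c : ℤ) :
    intCircle (5 * c) = mulTwoAddI '' intCircle c ∪ mulTwoSubI '' intCircle c := by
  ext p
  rw [Set.mem_union, image_mulTwoAddI_intCircle, image_mulTwoSubI_intCircle]
  refine ⟨fun hp => ?_, by rintro (⟨hp, -⟩ | ⟨hp, -⟩) <;> exact hp⟩
  have hp' : p.1 ^ 2 + p.2 ^ 2 = 5 * c := hp
  have : (5 : ℤ) ∣ (2 * p.1 + p.2) * (2 * p.1 - p.2) :=
    ⟨4 * c - p.2 ^ 2, by linear_combination 4 * hp'⟩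
  exact ((by norm_num : Prime (5 : ℤ)).dvd_mul.1 this).imp (⟨hp, ·⟩) (⟨hp, ·⟩)

theorem image_mulTwoAddI_inter_image_mulTwoSubI (c : ℤ) :
    mulTwoAddI '' intCircle c ∩ mulTwoSubI '' intCircle c =
      ((5 : ℤ) • ·) '' {w | 5 * (w.1 ^ 2 + w.2 ^ 2) = c} := by
  rw [image_mulTwoAddI_intCircle, image_mulTwoSubI_intCircle]
  ext ⟨m, n⟩
  simp only [intCircle, Set.mem_inter_iff, Set.mem_image, Set.mem_ofPred_eq, Prod.exists,
    Prod.smul_mk, Prod.mk.injEq]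
  constructor
  · rintro ⟨⟨h, h₁⟩, -, h₂⟩
    obtain ⟨a, rfl⟩ : (5 : ℤ) ∣ m := by omega
    obtain ⟨b, rfl⟩ : (5 : ℤ) ∣ n := by omega
    exact ⟨a, b, mul_left_cancel₀ (by norm_num : (5 : ℤ) ≠ 0) (by linear_combination h), rfl, rfl⟩
  · rintro ⟨a, b, h, rfl, rfl⟩
    exact ⟨⟨by linear_combination 5 * h, 2 * a + b, by ring⟩, by linear_combination 5 * h,
      2 * a - b, by ring⟩

theorem ncard_intCircle_five_mul (c : ℤ) :
    (intCircle (5 * c)).ncard + {w : ℤ × ℤ | 5 * (w.1 ^ 2 + w.2 ^ 2) = c}.ncard =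
      2 * (intCircle c).ncard := by
  rw [intCircle_five_mul,
    ← Set.ncard_image_of_injective {w : ℤ × ℤ | 5 * (w.1 ^ 2 + w.2 ^ 2) = c}
      (smul_right_injective (ℤ × ℤ) (by norm_num : (5 : ℤ) ≠ 0)),
    ← image_mulTwoAddI_inter_image_mulTwoSubI,
    Set.ncard_union_add_ncard_inter _ _ ((intCircle_finite c).image _)
      ((intCircle_finite c).image _),
    Set.ncard_image_of_injective _ mulTwoAddI_injective,
    Set.ncard_image_of_injective _ mulTwoSubI_injective, two_mul]

theorem intCircle_one : intCircle 1 = {(1, 0), (-1, 0), (0, 1), (0, -1)} := by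
  ext ⟨x, y⟩
  simp only [intCircle, Set.mem_ofPred_eq, Set.mem_insert_iff, Set.mem_singleton_iff,
    Prod.mk.injEq]
  constructor
  · intro h
    have : -1 ≤ x := by nlinarith [sq_nonneg y]
    have : x ≤ 1 := by nlinarith [sq_nonneg y]
    have : -1 ≤ y := by nlinarith [sq_nonneg x]
    have : y ≤ 1 := by nlinarith [sq_nonneg x]
    interval_cases x <;> interval_cases y <;> simp_all
  · rintro (⟨rfl, rfl⟩ | ⟨rfl, rfl⟩ | ⟨rfl, rfl⟩ | ⟨rfl, rfl⟩) <;> norm_num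

theorem ncard_intCircle_one : (intCircle 1).ncard = 4 := by
  rw [intCircle_one, Set.ncard_eq_toFinset_card']
  rfl

theorem ncard_intCircle_five_pow (k : ℕ) : (intCircle (5 ^ k)).ncard = 4 * (k + 1) := by
  induction k using Nat.twoStepInduction with
  | zero => exact ncard_intCircle_one
  | one =>
    have h := ncard_intCircle_five_mul 1
    have h0 : {w : ℤ × ℤ | 5 * (w.1 ^ 2 + w.2 ^ 2) = 1} = ∅ :=
      Set.eq_empty_of_forall_notMem fun w (hw : 5 * _ = 1) => by omega
    rw [h0, Set.ncard_empty, mul_one, ncard_intCircle_one] at h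
    rw [pow_one]
    omega
  | more k ih₀ ih₁ =>
    have h := ncard_intCircle_five_mul (5 ^ (k + 1))
    have h0 : {w : ℤ × ℤ | 5 * (w.1 ^ 2 + w.2 ^ 2) = 5 ^ (k + 1)} = intCircle (5 ^ k) := by
      ext w
      rw [pow_succ']
      exact mul_right_inj' (by norm_num)
    rw [h0, ← pow_succ'] at h
    change (intCircle (5 ^ (k + 2))).ncard + _ = _ at h
    omega

theorem intCircle_two_mul (c : ℤ) : intCircle (2 * c) = mulOneAddI '' intCircle c := by
  ext ⟨m, n⟩
  simp only [intCircle, Set.mem_image, Set.mem_ofPred_eq, Prod.exists, mulOneAddI, Prod.mk.injEq]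
  constructor
  · intro h
    obtain ⟨t, ht⟩ : Even (m + n) := by
      have : Even (m ^ 2 + n ^ 2) := ⟨c, by linarith⟩
      simpa [Int.even_add, Int.even_pow] using this
    refine ⟨t, t - m, mul_left_cancel₀ two_ne_zero ?_, by ring, by linarith⟩
    linear_combination h - (2 * t - m + n) * ht
  · rintro ⟨a, b, h, rfl, rfl⟩
    linear_combination 2 * h

def positiveReps (n : ℕ) : Set (ℕ × ℕ) := {p | 1 ≤ p.1 ∧ 1 ≤ p.2 ∧ p.1 ^ 2 + p.2 ^ 2 = n}

theorem Int.sign_mem_of_ne_zero {x : ℤ} (hx : x ≠ 0) : x.sign ∈ ({1, -1} : Set ℤ) := by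
  rcases hx.lt_or_gt with h | h
  · exact Or.inr (Int.sign_eq_neg_one_of_neg h)
  · exact Or.inl (Int.sign_eq_one_of_pos h)

theorem ncard_intCircle_eq_four_mul (n : ℕ) (hn : ∀ x : ℤ, x ^ 2 ≠ n) :
    (intCircle n).ncard = 4 * (positiveReps n).ncard := by
  let signs : Set ℤ := {1, -1}
  let f : (ℤ × ℤ) × (ℕ × ℕ) → ℤ × ℤ := fun q => (q.1.1 * q.2.1, q.1.2 * q.2.2)
  have hsigns : (signs ×ˢ signs).ncard = 4 := by
    rw [Set.ncard_prod, Set.ncard_pair (by norm_num)]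
  have hinj : Set.InjOn f ((signs ×ˢ signs) ×ˢ positiveReps n) := by
    rintro ⟨⟨u, v⟩, a, b⟩ ⟨⟨hu, hv⟩, ha, hb, -⟩ ⟨⟨u', v'⟩, a', b'⟩ ⟨⟨hu', hv'⟩, ha', hb', -⟩ h
    dsimp only at ha hb ha' hb'
    simp only [f, Prod.mk.injEq] at h ⊢
    rcases hu with rfl | rfl <;> rcases hv with rfl | rfl <;> rcases hu' with rfl | rfl <;>
      rcases hv' with rfl | rfl <;> omega
  have himage : f '' ((signs ×ˢ signs) ×ˢ positiveReps n) = intCircle n := by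
    ext ⟨x, y⟩
    constructor
    · rintro ⟨⟨⟨u, v⟩, a, b⟩, ⟨⟨hu, hv⟩, -, -, h⟩, hxy⟩
      simp only [f, Prod.mk.injEq] at hxy
      obtain ⟨rfl, rfl⟩ := hxy
      have h' : (a : ℤ) ^ 2 + (b : ℤ) ^ 2 = n := by exact_mod_cast h
      rcases hu with rfl | rfl <;> rcases hv with rfl | rfl <;>
        simpa [intCircle] using h'
    · intro (h : x ^ 2 + y ^ 2 = n)
      have hx : x ≠ 0 := by rintro rfl; exact hn y (by simpa using h)
      have hy : y ≠ 0 := by rintro rfl; exact hn x (by simpa using h)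
      refine ⟨⟨(x.sign, y.sign), x.natAbs, y.natAbs⟩,
        ⟨⟨Int.sign_mem_of_ne_zero hx, Int.sign_mem_of_ne_zero hy⟩, Int.natAbs_pos.2 hx,
          Int.natAbs_pos.2 hy, ?_⟩, by simp only [f, Int.sign_mul_natAbs]⟩
      zify
      simpa [sq_abs] using h
  rw [← himage, hinj.ncard_image, Set.ncard_prod, hsigns]

theorem sq_ne_two_mul_five_pow (x : ℤ) (k : ℕ) : x ^ 2 ≠ 2 * 5 ^ k := by
  intro h
  -- modulo 4 the right side is 2, which is not a square
  have h4 := congrArg (Int.cast : ℤ → ZMod 4) h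
  push_cast at h4
  rw [show (5 : ZMod 4) = 1 from rfl, one_pow, mul_one] at h4
  generalize (x : ZMod 4) = y at h4
  revert y
  decide

theorem ncard_positiveReps_two_mul_five_pow (k : ℕ) :
    (positiveReps (2 * 5 ^ k)).ncard = k + 1 := by
  have h := ncard_intCircle_eq_four_mul (2 * 5 ^ k) (by exact_mod_cast (sq_ne_two_mul_five_pow · k))
  rw [Nat.cast_mul, Nat.cast_pow, Nat.cast_ofNat, Nat.cast_ofNat, intCircle_two_mul,
    Set.ncard_image_of_injective _ mulOneAddI_injective, ncard_intCircle_five_pow] at h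
  omega

theorem exists_ncard_positiveReps_succ_eq {N : ℕ} (hN : 1 ≤ N) :
    ∃ n : ℕ, (positiveReps (n + 1)).ncard = N := by
  refine ⟨2 * 5 ^ (N - 1) - 1, ?_⟩
  rw [Nat.sub_add_cancel (Nat.one_le_iff_ne_zero.2 (by positivity)),
    ncard_positiveReps_two_mul_five_pow]
  omega

def positiveLatticeDisk (n : ℕ) : Set (ℕ × ℕ) := {p | 1 ≤ p.1 ∧ 1 ≤ p.2 ∧ p.1 ^ 2 + p.2 ^ 2 ≤ n}

theorem positiveLatticeDisk_finite (n : ℕ) : (positiveLatticeDisk n).Finite :=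
  ((Set.finite_Iic n).prod (Set.finite_Iic n)).subset fun p ⟨_, _, h⟩ =>
    ⟨(Nat.le_self_pow two_ne_zero p.1).trans (by omega),
      (Nat.le_self_pow two_ne_zero p.2).trans (by omega)⟩

theorem positiveLatticeDisk_mono : Monotone positiveLatticeDisk :=
  fun _ _ hmn _ ⟨h₁, h₂, h⟩ => ⟨h₁, h₂, h.trans hmn⟩

theorem ncard_positiveLatticeDisk_succ (n : ℕ) :
    (positiveLatticeDisk (n + 1)).ncard =
      (positiveLatticeDisk n).ncard + (positiveReps (n + 1)).ncard := by
  have hunion : positiveLatticeDisk (n + 1) = positiveLatticeDisk n ∪ positiveReps (n + 1) := by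
    ext p
    simp only [positiveLatticeDisk, positiveReps, Set.mem_union, Set.mem_ofPred_eq]
    omega
  have hdisj : Disjoint (positiveLatticeDisk n) (positiveReps (n + 1)) :=
    Set.disjoint_left.2 fun _ ⟨_, _, h⟩ ⟨_, _, h'⟩ => by omega
  rw [hunion, Set.ncard_union_eq hdisj (positiveLatticeDisk_finite n)
    ((positiveLatticeDisk_finite (n + 1)).subset fun _ ⟨h₁, h₂, h⟩ => ⟨h₁, h₂, h.le⟩)]

theorem setOf_pi_sq_mul_le_eq_positiveLatticeDisk (Γ : ℝ) :
    {p : ℕ × ℕ | 1 ≤ p.1 ∧ 1 ≤ p.2 ∧ π ^ 2 * ((p.1 : ℝ) ^ 2 + (p.2 : ℝ) ^ 2) ≤ Γ} =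
      positiveLatticeDisk ⌊Γ / π ^ 2⌋₊ := by
  ext ⟨a, b⟩
  simp only [positiveLatticeDisk, Set.mem_ofPred_eq]
  refine and_congr_right fun ha => and_congr_right fun hb => ?_
  rw [Nat.le_floor_iff' (by positivity), le_div_iff₀ (by positivity), mul_comm]
  push_cast
  rfl

theorem setOf_pi_sq_mul_le_natCast_eq (m : ℕ) :
    {p : ℕ × ℕ | 1 ≤ p.1 ∧ 1 ≤ p.2 ∧ π ^ 2 * ((p.1 : ℝ) ^ 2 + (p.2 : ℝ) ^ 2) ≤ π ^ 2 * m} =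
      positiveLatticeDisk m := by
  rw [setOf_pi_sq_mul_le_eq_positiveLatticeDisk, mul_div_cancel_left₀ _ (by positivity),
    Nat.floor_natCast]

theorem setOf_pi_sq_mul_le_subset {Γ : ℝ} {n : ℕ} (hΓ : Γ < π ^ 2 * (n + 1 : ℕ)) :
    {p : ℕ × ℕ | 1 ≤ p.1 ∧ 1 ≤ p.2 ∧ π ^ 2 * ((p.1 : ℝ) ^ 2 + (p.2 : ℝ) ^ 2) ≤ Γ} ⊆
      positiveLatticeDisk n := by
  rw [setOf_pi_sq_mul_le_eq_positiveLatticeDisk]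
  refine positiveLatticeDisk_mono (Nat.lt_succ_iff.1 ((Nat.floor_lt' n.succ_ne_zero).2 ?_))
  rwa [div_lt_iff₀ (by positivity), mul_comm]

noncomputable def countingFunction (lam : ℕ → ℝ) (Γ : ℝ) : ℕ := {k : ℕ | 1 ≤ k ∧ lam k ≤ Γ}.ncard

section CountingFunction

variable {lam : ℕ → ℝ}

theorem le_countingFunction_iff (hmono : ∀ j k : ℕ, 1 ≤ j → j ≤ k → lam j ≤ lam k) {Γ : ℝ}
    (hfin : {k : ℕ | 1 ≤ k ∧ lam k ≤ Γ}.Finite) {k : ℕ} (hk : 1 ≤ k) :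
    lam k ≤ Γ ↔ k ≤ countingFunction lam Γ := by
  constructor
  · intro h
    have hsub : Set.Icc 1 k ⊆ {k : ℕ | 1 ≤ k ∧ lam k ≤ Γ} := fun j ⟨hj, hjk⟩ =>
      ⟨hj, (hmono j k hj hjk).trans h⟩
    simpa [countingFunction] using Set.ncard_le_ncard hsub hfin
  · intro h
    by_contra hlt
    have hsub : {k : ℕ | 1 ≤ k ∧ lam k ≤ Γ} ⊆ Set.Ico 1 k := fun j ⟨hj, hjΓ⟩ =>
      ⟨hj, lt_of_not_ge fun hkj => hlt ((hmono k j hk hkj).trans hjΓ)⟩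
    have := Set.ncard_le_ncard hsub (Set.finite_Ico 1 k)
    rw [Set.ncard_Ico_nat] at this
    exact absurd (h.trans this) (by omega)

theorem setOf_eq_eq_Ioc_countingFunction (hmono : ∀ j k : ℕ, 1 ≤ j → j ≤ k → lam j ≤ lam k) {G' G : ℝ}
    (hfin : {k : ℕ | 1 ≤ k ∧ lam k ≤ G}.Finite) (hG'G : G' < G)
    (hgap : ∀ Γ < G, countingFunction lam Γ ≤ countingFunction lam G') :
    {ℓ : ℕ | 1 ≤ ℓ ∧ lam ℓ = G} =
      Set.Ioc (countingFunction lam G') (countingFunction lam G) := by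
  have hfin_le : ∀ Γ ≤ G, {k : ℕ | 1 ≤ k ∧ lam k ≤ Γ}.Finite := fun Γ hΓ =>
    hfin.subset fun k ⟨hk, hkΓ⟩ => ⟨hk, hkΓ.trans hΓ⟩
  have hlt_iff : ∀ ℓ, 1 ≤ ℓ → (lam ℓ < G ↔ ℓ ≤ countingFunction lam G') := fun ℓ hℓ =>
    ⟨fun h => ((le_countingFunction_iff hmono (hfin_le _ h.le) hℓ).1 le_rfl).trans (hgap _ h),
      fun h => ((le_countingFunction_iff hmono (hfin_le _ hG'G.le) hℓ).2 h).trans_lt hG'G⟩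
  ext ℓ
  simp only [Set.mem_ofPred_eq, Set.mem_Ioc]
  constructor
  · rintro ⟨hℓ, h⟩
    exact ⟨not_le.1 fun h' => ((hlt_iff ℓ hℓ).2 h').ne h,
      (le_countingFunction_iff hmono hfin hℓ).1 h.le⟩
  · rintro ⟨h', h⟩
    have hℓ : 1 ≤ ℓ := by omega
    exact ⟨hℓ, ((le_countingFunction_iff hmono hfin hℓ).2 h).antisymm
      (not_lt.1 fun hlt => (not_le.2 h') ((hlt_iff ℓ hℓ).1 hlt))⟩

theorem exists_ncard_setOf_eq (hmono : ∀ j k : ℕ, 1 ≤ j → j ≤ k → lam j ≤ lam k) {N : ℕ}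
    (hN : 1 ≤ N) {G' G : ℝ} (hG'G : G' < G)
    (hgap : ∀ Γ < G, countingFunction lam Γ ≤ countingFunction lam G')
    (hjump : countingFunction lam G = countingFunction lam G' + N) :
    ∃ k : ℕ, 1 ≤ k ∧ {ℓ : ℕ | 1 ≤ ℓ ∧ lam ℓ = lam k}.ncard = N := by
  have hfin : {k : ℕ | 1 ≤ k ∧ lam k ≤ G}.Finite :=
    Set.finite_of_ncard_pos (show 0 < countingFunction lam G by omega)
  have hlevel := setOf_eq_eq_Ioc_countingFunction hmono hfin hG'G hgap
  rw [hjump] at hlevel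
  have hk : countingFunction lam G' + 1 ∈ {ℓ : ℕ | 1 ≤ ℓ ∧ lam ℓ = G} := by
    rw [hlevel]
    constructor <;> omega
  refine ⟨_, hk.1, ?_⟩
  rw [hk.2, hlevel, Set.ncard_Ioc_nat]
  omega

end CountingFunction

theorem stmt_14 (lam : ℕ → ℝ)
    (hmono : ∀ j k : ℕ, 1 ≤ j → j ≤ k → lam j ≤ lam k)
    (hcount : ∀ Γ : ℝ, ({k : ℕ | 1 ≤ k ∧ lam k ≤ Γ}).ncard =
      ({p : ℕ × ℕ | 1 ≤ p.1 ∧ 1 ≤ p.2 ∧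
        π ^ 2 * ((p.1 : ℝ) ^ 2 + (p.2 : ℝ) ^ 2) ≤ Γ}).ncard) :
    ∀ N : ℕ, 1 ≤ N → ∃ k : ℕ, 1 ≤ k ∧
      ({ℓ : ℕ | 1 ≤ ℓ ∧ lam ℓ = lam k}).ncard = N := by
  intro N hN
  obtain ⟨n, hn⟩ := exists_ncard_positiveReps_succ_eq hN
  refine exists_ncard_setOf_eq (G' := π ^ 2 * n) (G := π ^ 2 * (n + 1 : ℕ)) hmono hN
    (mul_lt_mul_of_pos_left (by exact_mod_cast n.lt_succ_self) (by positivity)) ?_ ?_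
  · intro Γ hΓ
    rw [countingFunction, countingFunction, hcount, hcount, setOf_pi_sq_mul_le_natCast_eq]
    exact Set.ncard_le_ncard (setOf_pi_sq_mul_le_subset hΓ) (positiveLatticeDisk_finite n)
  · rw [countingFunction, countingFunction, hcount, hcount, setOf_pi_sq_mul_le_natCast_eq,
      setOf_pi_sq_mul_le_natCast_eq, ncard_positiveLatticeDisk_succ, hn]
end

section
/- (Spectral gap on blocks below the cutoff, Case 2) Let μ be increasing with μ_1 ≥ 1 and K⁻¹k^{1/a} ≤ μ_k ≤ Kk^{1/a}, 1/2 ≤ a < 5/8. Fix ε ∈ (0, (5-8a)/4], k* ∈ ℕ*, and set n_Λ = ⌊Λ^{(1-2ε)/2}⌋ + 1. Then for Λ ≥ 1 + (2Kμ_{k*})^{4a} and all k < k* with μ_k ≤ Λ, one has μ_{k+n_Λ} - μ_k ≥ (1/(2K)) Λ^{(1-2ε)/(2a)}. -/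
theorem stmt_18 (μ : ℕ → ℝ) (a K ε : ℝ) (kstar : ℕ)
    (hmono : StrictMono μ) (hμ1 : 1 ≤ μ 1)
    (ha : (1:ℝ)/2 ≤ a) (ha' : a < 5/8) (hK : 1 ≤ K)
    (hWeyl : ∀ k : ℕ, 1 ≤ k → K⁻¹ * (k : ℝ) ^ (1 / a) ≤ μ k ∧ μ k ≤ K * (k : ℝ) ^ (1 / a))
    (hε : 0 < ε) (hε' : ε ≤ (5 - 8 * a) / 4) (hkstar : 1 ≤ kstar) :
    ∀ Λ : ℝ, 1 + (2 * K * μ kstar) ^ (4 * a) ≤ Λ →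
      ∀ k : ℕ, 1 ≤ k → k < kstar → μ k ≤ Λ →
        μ (k + (⌊Λ ^ ((1 - 2 * ε) / 2)⌋₊ + 1)) - μ k ≥
          (1 / (2 * K)) * Λ ^ ((1 - 2 * ε) / (2 * a)) := by
  intro Λ hΛ k hk1 hkks hkΛ
  have ha0 : (0:ℝ) < a := by linarith
  have hK0 : (0:ℝ) < K := by linarith
  have hμks : (1:ℝ) ≤ μ kstar := le_trans hμ1 (hmono.monotone hkstar)
  have hbase : (1:ℝ) ≤ 2 * K * μ kstar := by nlinarith
  have hpow_pos : (0:ℝ) ≤ (2 * K * μ kstar) ^ (4 * a) :=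
    Real.rpow_nonneg (by linarith) _
  have hΛ1 : (1:ℝ) ≤ Λ := by
    have : (1:ℝ) ≤ (2 * K * μ kstar) ^ (4 * a) :=
      Real.one_le_rpow hbase (by linarith)
    linarith
  have hΛ0 : (0:ℝ) ≤ Λ := by linarith
  set α : ℝ := (1 - 2 * ε) / (2 * a) with hα
  have hεq : ε ≤ 1/4 := by linarith
  have hexp : 1 / (4 * a) ≤ α := by
    rw [hα, div_le_div_iff₀ (by linarith) (by linarith)]
    nlinarith
  -- Λ^α ≥ 2 K μ_{kstar}
  have h1 : Λ ^ (1 / (4 * a)) ≤ Λ ^ α :=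
    Real.rpow_le_rpow_of_exponent_le hΛ1 hexp
  have h2 : (2 * K * μ kstar) ≤ Λ ^ (1 / (4 * a)) := by
    have h3 : ((2 * K * μ kstar) ^ (4 * a)) ^ (1 / (4 * a)) ≤ Λ ^ (1 / (4 * a)) :=
      Real.rpow_le_rpow hpow_pos (by linarith) (by positivity)
    calc 2 * K * μ kstar
        = ((2 * K * μ kstar) ^ (4 * a)) ^ (1 / (4 * a)) := by
          rw [← Real.rpow_mul (by linarith), mul_one_div_cancel (by positivity : (4:ℝ) * a ≠ 0),
            Real.rpow_one]
      _ ≤ Λ ^ (1 / (4 * a)) := h3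
  have hks_le : 2 * K * μ kstar ≤ Λ ^ α := le_trans h2 h1
  have hμk_lt : μ k < μ kstar := hmono hkks
  -- lower bound on μ (k + n)
  set n : ℕ := ⌊Λ ^ ((1 - 2 * ε) / 2)⌋₊ + 1 with hn
  have hn1 : 1 ≤ n := Nat.le_add_left 1 _
  have hnge : Λ ^ ((1 - 2 * ε) / 2) ≤ (n : ℝ) := by
    have := Nat.lt_floor_add_one (Λ ^ ((1 - 2 * ε) / 2))
    push_cast [hn]
    linarith
  have hweyl_n := (hWeyl n hn1).1
  have hpow : Λ ^ α ≤ (n : ℝ) ^ (1 / a) := by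
    have hx : (Λ ^ ((1 - 2 * ε) / 2)) ^ (1 / a) ≤ (n : ℝ) ^ (1 / a) :=
      Real.rpow_le_rpow (Real.rpow_nonneg hΛ0 _) hnge (by positivity)
    calc Λ ^ α = (Λ ^ ((1 - 2 * ε) / 2)) ^ (1 / a) := by
          rw [← Real.rpow_mul hΛ0]
          congr 1
          rw [hα, div_mul_div_comm, mul_one]
      _ ≤ (n : ℝ) ^ (1 / a) := hx
  have hlow : K⁻¹ * Λ ^ α ≤ μ (k + n) := by
    have h4 : K⁻¹ * Λ ^ α ≤ K⁻¹ * (n : ℝ) ^ (1 / a) := by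
      apply mul_le_mul_of_nonneg_left hpow (by positivity)
    have h5 : μ n ≤ μ (k + n) := hmono.monotone (Nat.le_add_left n k)
    linarith
  -- combine
  have hT : (0:ℝ) ≤ Λ ^ α := Real.rpow_nonneg hΛ0 _
  have hμk_small : μ k ≤ (1 / (2 * K)) * Λ ^ α := by
    have : μ kstar ≤ (1 / (2 * K)) * Λ ^ α := by
      rw [div_mul_eq_mul_div, one_mul, le_div_iff₀ (by positivity)]
      nlinarith
    linarith
  have hkey : K⁻¹ * Λ ^ α = (1 / (2 * K)) * Λ ^ α + (1 / (2 * K)) * Λ ^ α := by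
    field_simp
    ring
  linarith
end
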